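/- arXiv:1205.2819 — 6 statements merged into one kernel-verified Lean document; each statement's English description precedes it below -/
import Mathlib

section
/- Let H be a normal subgroup of a group G and let K be a subgroup of G commensurable with H. If L is a length function on G with L(k)=0 for all k ∈ K, then there exists a length function L′ on G equivalent to L such that L′ vanishes on both H and K. -/
noncomputable section

namespace HeckeRDPaper

/-- The conjugate subgroup `gHg⁻¹`. -/
def conjS {G : Type*} [Group G] (g : G) (H : Subgroup G) : Subgroup G :=
  Subgroup.map (MulAut.conj g).toMonoidHom H

/-- `H` is an almost normal subgroup of `G`: the index `|H : H ∩ gHg⁻¹|` is finite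
for every `g ∈ G`. -/
def AlmostNormal {G : Type*} [Group G] (H : Subgroup G) : Prop :=
  ∀ g : G, (conjS g H).relIndex H ≠ 0

/-- `H` and `K` are strongly commensurable: `H ∩ K` has finite index in both `H` and `K`. -/
def StronglyCommensurable {G : Type*} [Group G] (H K : Subgroup G) : Prop :=
  (H ⊓ K).relIndex H ≠ 0 ∧ (H ⊓ K).relIndex K ≠ 0

/-- `H` and `K` are commensurable: `H` and `gKg⁻¹` are strongly commensurable
for some `g ∈ G`. -/
def Commens {G : Type*} [Group G] (H K : Subgroup G) : Prop :=
  ∃ g : G, StronglyCommensurable H (conjS g K)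

/-- A length function on a group `G`. -/
structure IsLengthFunction {G : Type*} [Group G] (L : G → ℝ) : Prop where
  nonneg : ∀ g, 0 ≤ L g
  map_one : L 1 = 0
  map_inv : ∀ g, L g⁻¹ = L g
  subadd : ∀ g h, L (g * h) ≤ L g + L h

/-- A length function on the Hecke pair `(G, H)`: a length function on `G`
vanishing on `H`. -/
def IsHeckeLength {G : Type*} [Group G] (H : Subgroup G) (L : G → ℝ) : Prop :=
  IsLengthFunction L ∧ ∀ h ∈ H, L h = 0

/-- `L₁` dominates `L₂` if `L₂ ≤ a L₁ + b` for some positive constants `a`, `b`. -/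
def Dominates {G : Type*} [Group G] (L₁ L₂ : G → ℝ) : Prop :=
  ∃ a b : ℝ, 0 < a ∧ 0 < b ∧ ∀ g, L₂ g ≤ a * L₁ g + b

/-- Two length functions are equivalent if they dominate each other. -/
def EquivLen {G : Type*} [Group G] (L₁ L₂ : G → ℝ) : Prop :=
  Dominates L₁ L₂ ∧ Dominates L₂ L₁

/-- The set `H\G` of right cosets of `H` in `G`. -/
abbrev RCos {G : Type*} [Group G] (H : Subgroup G) := Quotient (QuotientGroup.rightRel H)

/-- The `ℓ²`-norm over the right cosets `H\G` of a (left `H`-invariant) function on `G`,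
computed using the set of representatives given by `Quotient.out`. -/
def l2 {G : Type*} [Group G] (H : Subgroup G) (f : G → ℝ) : ℝ :=
  Real.sqrt (∑' x : RCos H, f x.out ^ 2)

/-- The convolution `(f∗k)(g) = Σ_{x ∈ ⟨H\G⟩} f(gx⁻¹) k(x)`, the sum being over the
set of representatives of the right cosets of `H` given by `Quotient.out`. -/
def conv {G : Type*} [Group G] (H : Subgroup G) (f k : G → ℝ) : G → ℝ :=
  fun g => ∑' x : RCos H, f (g * x.out⁻¹) * k x.out

/-- `f` is supported on finitely many double cosets of `H`. -/
def FinDosetSupp {G : Type*} [Group G] (H : Subgroup G) (f : G → ℝ) : Prop :=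
  {s : Set G | ∃ g : G, f g ≠ 0 ∧
    s = {y : G | ∃ h₁ ∈ H, ∃ h₂ ∈ H, y = h₁ * g * h₂}}.Finite

/-- The Hecke pair `(G, H)` has property (RD) with respect to the length function `L`:
there is a polynomial `P` such that `‖f∗k‖₂ ≤ P(r) ‖f‖₂ ‖k‖₂` for every `r > 0`,
every nonnegative `H`-bi-invariant `f` supported on finitely many double cosets and
with `L ≤ r` on its support, and every nonnegative left-`H`-invariant square-summable `k`. -/
def HeckeRDwrt {G : Type*} [Group G] (H : Subgroup G) (L : G → ℝ) : Prop :=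
  ∃ P : Polynomial ℝ, ∀ r : ℝ, 0 < r → ∀ f k : G → ℝ,
    (∀ g, 0 ≤ f g) →
    (∀ g : G, ∀ h₁ ∈ H, ∀ h₂ ∈ H, f (h₁ * g * h₂) = f g) →
    FinDosetSupp H f →
    (∀ g, f g ≠ 0 → L g ≤ r) →
    (∀ g, 0 ≤ k g) →
    (∀ g : G, ∀ h ∈ H, k (h * g) = k g) →
    Summable (fun x : RCos H => k x.out ^ 2) →
    l2 H (conv H f k) ≤ P.eval r * l2 H f * l2 H k

/-- The Hecke pair `(G, H)` has property (RD): it has property (RD) with respect to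
some length function on `(G, H)`. -/
def HeckeRD {G : Type*} [Group G] (H : Subgroup G) : Prop :=
  ∃ L : G → ℝ, IsHeckeLength H L ∧ HeckeRDwrt H L

/-- A group has property (RD) with respect to `L` if the Hecke pair `(Γ, {1})` does. -/
def GroupRDwrt (Γ : Type*) [Group Γ] (L : Γ → ℝ) : Prop :=
  HeckeRDwrt (⊥ : Subgroup Γ) L

/-- A group has property (RD) if the Hecke pair `(Γ, {1})` does. -/
def GroupRD (Γ : Type*) [Group Γ] : Prop :=
  HeckeRD (⊥ : Subgroup Γ)

/-- A set-theoretic cross-section `σ : E/N → E` of the quotient map which is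
consistent with the Hecke pair `(·, H)`, i.e. `π ∘ σ = id`, `σ(1) = 1` and
`σ(x) H σ(x)⁻¹ = H` for all `x ∈ E/N`. -/
def ConsistentSection {E : Type*} [Group E] (N : Subgroup E) [N.Normal] (H : Subgroup E)
    (σ : E ⧸ N → E) : Prop :=
  (∀ x : E ⧸ N, (QuotientGroup.mk (σ x) : E ⧸ N) = x) ∧ σ 1 = 1 ∧
    ∀ x : E ⧸ N, ∀ h : E, h ∈ H ↔ σ x * h * (σ x)⁻¹ ∈ H

end HeckeRDPaper

/-!
Replacing `L` by the infimum of `L` over the cosets of `H` gives a length function vanishing on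
`H` (normality of `H` makes this infimum symmetric and subadditive), still vanishing on `K`, and
at most `L`. It is equivalent to `L` as soon as `L` is bounded on `H`: then `L g ≤ L (h * g) + C`
for all `h ∈ H`. Boundedness on `H` comes from commensurability: `L` is bounded on every conjugate
`g K g⁻¹`, hence on `H ∩ g K g⁻¹`, hence on the finitely many cosets of it that make up `H`.
-/

namespace HeckeRDPaper

variable {G : Type*} [Group G] {L : G → ℝ}

theorem dominates_of_le_add {L₁ L₂ : G → ℝ} (c : ℝ) (h : ∀ g, L₂ g ≤ L₁ g + c) :
    Dominates L₁ L₂ :=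
  ⟨1, |c| + 1, one_pos, by positivity, fun g => by linarith [h g, le_abs_self c]⟩

namespace IsLengthFunction

variable (hL : IsLengthFunction L)
include hL

theorem le_conj (g k : G) : L (g * k * g⁻¹) ≤ 2 * L g + L k :=
  calc L (g * k * g⁻¹) ≤ L g + L k + L g⁻¹ := (hL.subadd _ _).trans (by linarith [hL.subadd g k])
    _ = 2 * L g + L k := by rw [hL.map_inv]; ring

theorem le_of_mem_conjS {K : Subgroup G} {c : ℝ} (hc : ∀ k ∈ K, L k ≤ c) (g : G) :
    ∀ x ∈ conjS g K, L x ≤ 2 * L g + c := by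
  rintro _ ⟨k, hk, rfl⟩
  exact (hL.le_conj g k).trans (by linarith [hc k hk])

theorem exists_bound_of_relIndex_ne_zero {M H : Subgroup G} (hMH : M.relIndex H ≠ 0) {c : ℝ}
    (hc : ∀ m ∈ M, L m ≤ c) : ∃ C, ∀ h ∈ H, L h ≤ C := by
  have : (M.subgroupOf H).FiniteIndex := ⟨hMH⟩
  obtain ⟨B, hB⟩ := (Set.finite_range fun q : H ⧸ M.subgroupOf H => L (q.out : G)).bddAbove
  refine ⟨B + c, fun h hh => ?_⟩
  set q : H ⧸ M.subgroupOf H := QuotientGroup.mk ⟨h, hh⟩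
  obtain ⟨⟨m, hm⟩, hout⟩ := QuotientGroup.mk_out_eq_mul (M.subgroupOf H) ⟨h, hh⟩
  have hout' : (q.out : G) = h * m := congrArg Subtype.val hout
  calc L h = L (q.out * (m : G)⁻¹) := by rw [hout', mul_inv_cancel_right]
    _ ≤ L (q.out : G) + L (m : G) := by rw [← hL.map_inv (m : G)]; exact hL.subadd _ _
    _ ≤ B + c := add_le_add (hB ⟨q, rfl⟩) (hc _ hm)

end IsLengthFunction

/-- The length of the coset `H g`; for normal `H` it is the quotient length on `G ⧸ H`. -/
def cosetInf (H : Subgroup G) (L : G → ℝ) (g : G) : ℝ :=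
  ⨅ h : H, L (h * g)

namespace IsLengthFunction

variable (hL : IsLengthFunction L) {H : Subgroup G}
include hL

theorem cosetInf_le (g : G) {h : G} (hh : h ∈ H) : cosetInf H L g ≤ L (h * g) :=
  ciInf_le (f := fun h : H => L (h * g)) ⟨0, by rintro _ ⟨h, rfl⟩; exact hL.nonneg _⟩ ⟨h, hh⟩

omit hL in
theorem le_cosetInf {g : G} {c : ℝ} (hc : ∀ h ∈ H, c ≤ L (h * g)) : c ≤ cosetInf H L g :=
  le_ciInf fun h => hc h h.2

theorem cosetInf_nonneg (g : G) : 0 ≤ cosetInf H L g :=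
  le_cosetInf fun _ _ => hL.nonneg _

theorem cosetInf_le_self (g : G) : cosetInf H L g ≤ L g := by
  simpa using hL.cosetInf_le g H.one_mem

theorem cosetInf_eq_zero_of_mem {h : G} (hh : h ∈ H) : cosetInf H L h = 0 :=
  le_antisymm (by simpa [hL.map_one] using hL.cosetInf_le h (H.inv_mem hh)) (hL.cosetInf_nonneg h)

theorem le_cosetInf_add {C : ℝ} (hC : ∀ h ∈ H, L h ≤ C) (g : G) : L g ≤ cosetInf H L g + C := by
  suffices L g - C ≤ cosetInf H L g by linarith
  refine le_cosetInf fun h hh => ?_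
  have := hL.subadd h⁻¹ (h * g)
  rw [inv_mul_cancel_left, hL.map_inv] at this
  linarith [hC h hh]

theorem cosetInf_inv_le [H.Normal] (g : G) : cosetInf H L g⁻¹ ≤ cosetInf H L g := by
  refine le_cosetInf fun h hh => ?_
  have hconj : g⁻¹ * h⁻¹ * g⁻¹⁻¹ ∈ H := ‹H.Normal›.conj_mem _ (H.inv_mem hh) g⁻¹
  calc cosetInf H L g⁻¹ ≤ L (g⁻¹ * h⁻¹ * g⁻¹⁻¹ * g⁻¹) := hL.cosetInf_le _ hconj
    _ = L (h * g) := by rw [← hL.map_inv (h * g)]; group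

theorem isLengthFunction_cosetInf [H.Normal] : IsLengthFunction (cosetInf H L) where
  nonneg := hL.cosetInf_nonneg
  map_one := hL.cosetInf_eq_zero_of_mem H.one_mem
  map_inv g := le_antisymm (hL.cosetInf_inv_le g) (by simpa using hL.cosetInf_inv_le g⁻¹)
  subadd g₁ g₂ := by
    -- `h₁ g₁ h₂ g₂ = (h₁ g₁ h₂ g₁⁻¹) g₁ g₂` lies in the coset `H g₁ g₂`.
    have key : ∀ h₁ ∈ H, ∀ h₂ ∈ H,
        cosetInf H L (g₁ * g₂) ≤ L (h₁ * g₁) + L (h₂ * g₂) := fun h₁ hh₁ h₂ hh₂ => by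
      have hmem : h₁ * (g₁ * h₂ * g₁⁻¹) ∈ H := H.mul_mem hh₁ (‹H.Normal›.conj_mem _ hh₂ g₁)
      calc cosetInf H L (g₁ * g₂) ≤ L (h₁ * (g₁ * h₂ * g₁⁻¹) * (g₁ * g₂)) :=
            hL.cosetInf_le _ hmem
        _ = L (h₁ * g₁ * (h₂ * g₂)) := by group
        _ ≤ L (h₁ * g₁) + L (h₂ * g₂) := hL.subadd _ _
    suffices cosetInf H L (g₁ * g₂) - cosetInf H L g₁ ≤ cosetInf H L g₂ by linarith
    refine le_cosetInf fun h₂ hh₂ => ?_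
    suffices cosetInf H L (g₁ * g₂) - L (h₂ * g₂) ≤ cosetInf H L g₁ by linarith
    exact le_cosetInf fun h₁ hh₁ => by linarith [key h₁ hh₁ h₂ hh₂]

theorem equivLen_cosetInf {C : ℝ} (hC : ∀ h ∈ H, L h ≤ C) : EquivLen L (cosetInf H L) :=
  ⟨dominates_of_le_add 0 fun g => by linarith [hL.cosetInf_le_self (H := H) g],
    dominates_of_le_add C (hL.le_cosetInf_add hC)⟩

end IsLengthFunction

end HeckeRDPaper

open HeckeRDPaper in
/-- If `H` is normal, `K` is commensurable with `H`, and `L` is a length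
function vanishing on `K`, then there is an equivalent length function `L'` vanishing
on both `H` and `K`. -/
theorem stmt1 {G : Type*} [Group G] (H K : Subgroup G) [H.Normal]
    (hcomm : Commens H K)
    (L : G → ℝ) (hL : IsLengthFunction L) (hLK : ∀ k ∈ K, L k = 0) :
    ∃ L' : G → ℝ, IsLengthFunction L' ∧ EquivLen L L' ∧
      (∀ h ∈ H, L' h = 0) ∧ (∀ k ∈ K, L' k = 0) := by
  obtain ⟨g₀, hHK, -⟩ := hcomm
  have hboundK := hL.le_of_mem_conjS (fun k hk => (hLK k hk).le) g₀
  obtain ⟨C, hC⟩ := hL.exists_bound_of_relIndex_ne_zero hHK fun x hx => hboundK x hx.2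
  refine ⟨cosetInf H L, hL.isLengthFunction_cosetInf, hL.equivLen_cosetInf hC,
    fun h hh => hL.cosetInf_eq_zero_of_mem hh, fun k hk => ?_⟩
  exact le_antisymm ((hL.cosetInf_le_self k).trans (hLK k hk).le) (hL.cosetInf_nonneg k)
end
end

section
/- Let H be a normal subgroup of a group G and let K be a subgroup of G commensurable with H. If L is a length function on G with L(h)=0 for all h ∈ H, then there exists a length function L′ on G equivalent to L such that L′ vanishes on both H and K. -/
noncomputable section

/-!
If `L` is a length function, `d(a, b) = L (a⁻¹ * b)` is a left-invariant pseudometric, so the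
Hausdorff distance between a finite set `S` and its translate `x • S` is again a length function,
within `2 max_S L` of `L`. Since `H` is normal and conjugation preserves relative indices, `H` has
finite index in `K`. Taking for `S` finitely many representatives of `K` modulo `H`, for
`x ∈ H ∪ K` every `s ∈ S` has some `t ∈ S` with `s⁻¹ * x * t ∈ H`, where `L` vanishes; so the
Hausdorff length vanishes on `H` and `K`.
-/

namespace HeckeRDPaper

variable {G : Type*} [Group G]

namespace IsLengthFunction

variable {L : G → ℝ} (hL : IsLengthFunction L)
include hL

lemma conj_le (s x : G) : L (s⁻¹ * x * s) ≤ L x + 2 * L s := by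
  have h₁ := hL.subadd (s⁻¹ * x) s
  have h₂ := hL.subadd s⁻¹ x
  rw [hL.map_inv] at h₂
  linarith

lemma le_inv_mul_mul_add (s x t : G) : L x ≤ L (s⁻¹ * x * t) + L s + L t := by
  have h₁ := hL.subadd (s * (s⁻¹ * x * t)) t⁻¹
  have h₂ := hL.subadd s (s⁻¹ * x * t)
  rw [hL.map_inv, show s * (s⁻¹ * x * t) * t⁻¹ = x by group] at h₁
  linarith

end IsLengthFunction

lemma equivLen_of_le_add {L₁ L₂ : G → ℝ} {c : ℝ} (h₁₂ : ∀ x, L₂ x ≤ L₁ x + c)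
    (h₂₁ : ∀ x, L₁ x ≤ L₂ x + c) : EquivLen L₁ L₂ := by
  have hc : c < |c| + 1 := by linarith [le_abs_self c]
  exact ⟨⟨1, |c| + 1, one_pos, by positivity, fun x => by linarith [h₁₂ x]⟩,
    ⟨1, |c| + 1, one_pos, by positivity, fun x => by linarith [h₂₁ x]⟩⟩

section Hausdorff

/-- `sup_{s ∈ S} d(s, x • S)` for the pseudometric `d(a, b) = L (a⁻¹ * b)`. -/
def hausdorffHalf (L : G → ℝ) (S : Finset G) (hS : S.Nonempty) (x : G) : ℝ :=
  S.sup' hS fun s => S.inf' hS fun t => L (s⁻¹ * x * t)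

/-- The Hausdorff distance between `S` and `x • S` for the pseudometric `d(a, b) = L (a⁻¹ * b)`:
`sup_{t ∈ S} d(x • t, S)` is `hausdorffHalf L S hS x⁻¹`. -/
def hausdorffLength (L : G → ℝ) (S : Finset G) (hS : S.Nonempty) (x : G) : ℝ :=
  max (hausdorffHalf L S hS x) (hausdorffHalf L S hS x⁻¹)

variable {L : G → ℝ} {S : Finset G} {hS : S.Nonempty}

lemma exists_le_hausdorffHalf (x : G) {s : G} (hs : s ∈ S) :
    ∃ t ∈ S, L (s⁻¹ * x * t) ≤ hausdorffHalf L S hS x := by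
  obtain ⟨t, ht, hteq⟩ := Finset.exists_mem_eq_inf' hS fun t => L (s⁻¹ * x * t)
  exact ⟨t, ht, hteq ▸ Finset.le_sup' (fun s => S.inf' hS fun t => L (s⁻¹ * x * t)) hs⟩

lemma hausdorffHalf_le {x : G} {c : ℝ} (h : ∀ s ∈ S, ∃ t ∈ S, L (s⁻¹ * x * t) ≤ c) :
    hausdorffHalf L S hS x ≤ c :=
  Finset.sup'_le hS _ fun s hs =>
    let ⟨_, ht, hle⟩ := h s hs
    (Finset.inf'_le _ ht).trans hle

variable (hL : IsLengthFunction L)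
include hL

lemma hausdorffHalf_nonneg (x : G) : 0 ≤ hausdorffHalf L S hS x := by
  obtain ⟨s, hs⟩ := hS
  obtain ⟨_, -, hle⟩ := exists_le_hausdorffHalf (L := L) x hs
  exact (hL.nonneg _).trans hle

lemma hausdorffHalf_mul_le (x y : G) :
    hausdorffHalf L S hS (x * y) ≤ hausdorffHalf L S hS x + hausdorffHalf L S hS y := by
  refine hausdorffHalf_le fun s hs => ?_
  obtain ⟨t, ht, hxt⟩ := exists_le_hausdorffHalf (hS := hS) x hs
  obtain ⟨u, hu, hyu⟩ := exists_le_hausdorffHalf (hS := hS) y ht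
  refine ⟨u, hu, ?_⟩
  calc L (s⁻¹ * (x * y) * u) = L ((s⁻¹ * x * t) * (t⁻¹ * y * u)) := by group
    _ ≤ L (s⁻¹ * x * t) + L (t⁻¹ * y * u) := hL.subadd _ _
    _ ≤ _ := add_le_add hxt hyu

lemma hausdorffHalf_one : hausdorffHalf L S hS 1 = 0 :=
  le_antisymm (hausdorffHalf_le fun s hs => ⟨s, hs, by simp [hL.map_one]⟩)
    (hausdorffHalf_nonneg hL 1)

lemma isLengthFunction_hausdorffLength : IsLengthFunction (hausdorffLength L S hS) where
  nonneg x := (hausdorffHalf_nonneg hL x).trans (le_max_left _ _)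
  map_one := by simp [hausdorffLength, hausdorffHalf_one hL]
  map_inv x := by simp [hausdorffLength, max_comm]
  subadd x y := by
    simp only [hausdorffLength, mul_inv_rev]
    exact max_le
      ((hausdorffHalf_mul_le hL x y).trans (add_le_add (le_max_left _ _) (le_max_left _ _)))
      ((hausdorffHalf_mul_le hL y⁻¹ x⁻¹).trans
        ((add_comm _ _).trans_le (add_le_add (le_max_right _ _) (le_max_right _ _))))

lemma hausdorffLength_le (x : G) : hausdorffLength L S hS x ≤ L x + 2 * S.sup' hS L := by
  have key (y : G) : hausdorffHalf L S hS y ≤ L y + 2 * S.sup' hS L :=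
    hausdorffHalf_le fun s hs =>
      ⟨s, hs, (hL.conj_le s y).trans (by linarith [Finset.le_sup' L hs])⟩
  exact max_le (key x) (hL.map_inv x ▸ key x⁻¹)

lemma le_hausdorffLength (x : G) : L x ≤ hausdorffLength L S hS x + 2 * S.sup' hS L := by
  obtain ⟨s, hs⟩ := id hS
  obtain ⟨t, ht, hle⟩ := exists_le_hausdorffHalf (L := L) (hS := hS) x hs
  have hsC : L s ≤ S.sup' hS L := Finset.le_sup' L hs
  have htC : L t ≤ S.sup' hS L := Finset.le_sup' L ht
  have hA : hausdorffHalf L S hS x ≤ hausdorffLength L S hS x := le_max_left _ _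
  linarith [hL.le_inv_mul_mul_add s x t]

lemma hausdorffLength_eq_zero_of_mem {M : Subgroup G}
    (hM : ∀ x ∈ M, ∀ s ∈ S, ∃ t ∈ S, L (s⁻¹ * x * t) = 0) {x : G} (hx : x ∈ M) :
    hausdorffLength L S hS x = 0 := by
  have key {y : G} (hy : y ∈ M) : hausdorffHalf L S hS y = 0 :=
    le_antisymm (hausdorffHalf_le fun s hs => (hM y hy s hs).imp fun _ ⟨ht, h⟩ => ⟨ht, h.le⟩)
      (hausdorffHalf_nonneg hL y)
  simp [hausdorffLength, key hx, key (M.inv_mem hx)]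

end Hausdorff

lemma relIndex_ne_zero_of_commens {H K : Subgroup G} [H.Normal] (h : Commens H K) :
    H.relIndex K ≠ 0 := by
  obtain ⟨g, -, hK⟩ := h
  rw [Subgroup.inf_relIndex_right] at hK
  have hH : conjS g H = H := Subgroup.Normal.map_conj_eq H g
  rwa [← hH, conjS, conjS, Subgroup.relIndex_map_map_of_injective _ _ (MulAut.conj g).injective]
    at hK

lemma exists_finset_forall_exists_inv_mul_mem {H K : Subgroup G} (h : H.relIndex K ≠ 0) :
    ∃ S : Finset G, (S : Set G) ⊆ K ∧ ∀ k ∈ K, ∃ t ∈ S, t⁻¹ * k ∈ H := by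
  have : (H.subgroupOf K).FiniteIndex := ⟨h⟩
  let rep : K ⧸ H.subgroupOf K → G := fun q => (q.out : G)
  refine ⟨(Set.finite_range rep).toFinset, ?_, fun k hk => ?_⟩
  · rintro _ hx
    obtain ⟨q, rfl⟩ := (Set.Finite.mem_toFinset _).mp hx
    exact q.out.2
  · obtain ⟨h', hh'⟩ := QuotientGroup.mk_out_eq_mul (H.subgroupOf K) ⟨k, hk⟩
    refine ⟨rep (QuotientGroup.mk ⟨k, hk⟩), by simp, ?_⟩
    simpa [rep, hh'] using H.inv_mem (Subgroup.mem_subgroupOf.mp h'.2)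

end HeckeRDPaper

open HeckeRDPaper in
/-- If `H` is normal, `K` is commensurable with `H`, and `L` is a length
function vanishing on `H`, then there is an equivalent length function `L'` vanishing
on both `H` and `K`. -/
theorem stmt2 {G : Type*} [Group G] (H K : Subgroup G) [H.Normal]
    (hcomm : Commens H K)
    (L : G → ℝ) (hL : IsLengthFunction L) (hLH : ∀ h ∈ H, L h = 0) :
    ∃ L' : G → ℝ, IsLengthFunction L' ∧ EquivLen L L' ∧
      (∀ h ∈ H, L' h = 0) ∧ (∀ k ∈ K, L' k = 0) := by
  obtain ⟨S, hSK, hrep⟩ :=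
    exists_finset_forall_exists_inv_mul_mem (relIndex_ne_zero_of_commens hcomm)
  have hS : S.Nonempty := let ⟨t, ht, _⟩ := hrep 1 K.one_mem; ⟨t, ht⟩
  refine ⟨hausdorffLength L S hS, isLengthFunction_hausdorffLength hL,
    equivLen_of_le_add (hausdorffLength_le hL) (le_hausdorffLength hL),
    fun h hh => hausdorffLength_eq_zero_of_mem hL (fun x hx s hs => ⟨s, hs, ?_⟩) hh,
    fun k hk => hausdorffLength_eq_zero_of_mem hL (fun x hx s hs => ?_) hk⟩
  · exact hLH _ (by simpa using Subgroup.Normal.conj_mem ‹H.Normal› x hx s⁻¹)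
  · -- a representative `t` of `x⁻¹ * s` modulo `H` gives `s⁻¹ * x * t = (t⁻¹ * (x⁻¹ * s))⁻¹ ∈ H`
    obtain ⟨t, ht, hmem⟩ := hrep (x⁻¹ * s) (K.mul_mem (K.inv_mem hx) (hSK hs))
    exact ⟨t, ht, hLH _ (by simpa [mul_assoc] using H.inv_mem hmem)⟩
end
end

section
/- Every finitely generated group whose commutator (derived) subgroup is finite has property (RD). -/
noncomputable section

/-! The abelianization of a finitely generated group `G` is `ℤⁿ × T` with `T` finite, so when
`[G, G]` is finite the projection `φ : G →* ℤⁿ` has finite kernel. For the length `‖φ g‖`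
(sup norm on `ℤⁿ`) a set of elements of length `≤ r` has at most `|ker φ| (2r + 1)ⁿ` elements,
and such polynomial growth gives (RD) through
`‖f ∗ k‖₂ ≤ ‖f‖₁ ‖k‖₂ ≤ √|supp f| ‖f‖₂ ‖k‖₂`. -/

open Finset

section FiniteKernel

variable {G H K : Type*} [Group G] [Group H] [Group K]

@[to_additive]
theorem MonoidHom.finite_preimage_singleton (f : G →* H) [Finite f.ker] (b : H) :
    (f ⁻¹' {b}).Finite := by
  by_cases hb : b ∈ Set.range f
  · obtain ⟨a, rfl⟩ := hb
    exact Set.finite_coe_iff.mp (Finite.of_equiv _ (f.fiberEquivKer a).symm)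
  · rw [Set.preimage_singleton_eq_empty.mpr hb]
    exact Set.finite_empty

@[to_additive]
theorem MonoidHom.finite_ker_of_injective {f : G →* H} (hf : Function.Injective f) :
    Finite f.ker := by
  rw [(MonoidHom.ker_eq_bot_iff f).mpr hf]
  infer_instance

@[to_additive]
theorem MonoidHom.finite_ker_comp (f : G →* H) (g : H →* K) [Finite f.ker] [Finite g.ker] :
    Finite (g.comp f).ker := by
  rw [← MonoidHom.comap_ker]
  exact ((Set.toFinite (g.ker : Set H)).preimage' fun b _ =>
    f.finite_preimage_singleton b).to_subtype

theorem MonoidHom.card_le_card_ker_mul_card_image [DecidableEq H] (f : G →* H) [Finite f.ker]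
    (S : Finset G) : #S ≤ Nat.card f.ker * #(S.image f) := by
  refine card_le_mul_card_image S _ fun b hb => ?_
  obtain ⟨a, -, rfl⟩ := mem_image.mp hb
  calc #{x ∈ S | f x = f a} = (↑{x ∈ S | f x = f a} : Set G).ncard := (Set.ncard_coe_finset _).symm
    _ ≤ (f ⁻¹' {f a}).ncard :=
        Set.ncard_le_ncard (fun x hx => (mem_filter.mp hx).2) (f.finite_preimage_singleton _)
    _ = Nat.card f.ker := by rw [← Nat.card_coe_set_eq, Nat.card_congr (f.fiberEquivKer a)]

end FiniteKernel

section Growth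

variable {G : Type*} [Group G]

theorem exists_monoidHom_pi_int_finite_ker [Group.FG G] [Finite (commutator G)] :
    ∃ (n : ℕ) (φ : G →* Multiplicative (Fin n → ℤ)), Finite φ.ker := by
  have : Group.FG (Abelianization G) := Group.fg_of_surjective (QuotientGroup.mk'_surjective _)
  obtain ⟨n, ι, _, p, hp, e, ⟨F⟩⟩ :=
    AddCommGroup.equiv_free_prod_directSum_zmod (Additive (Abelianization G))
  have : ∀ i, NeZero (p i ^ e i) := fun i => ⟨pow_ne_zero _ (hp i).ne_zero⟩
  have : Finite (DirectSum ι fun i => ZMod (p i ^ e i)) :=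
    Finite.of_equiv _ DFinsupp.equivFunOnFintype.symm
  let F' := F.trans ((Finsupp.linearEquivFunOnFinite ℤ ℤ (Fin n)).toAddEquiv.prodCongr
    (AddEquiv.refl _))
  let ψ := (AddMonoidHom.fst _ _).comp F'.toAddMonoidHom
  have : Finite F'.toAddMonoidHom.ker := AddMonoidHom.finite_ker_of_injective F'.injective
  have : Finite (AddMonoidHom.fst (Fin n → ℤ) (DirectSum ι fun i => ZMod (p i ^ e i))).ker := by
    rw [AddMonoidHom.ker_fst, ← SetLike.coe_sort_coe, AddSubgroup.coe_prod, AddSubgroup.coe_bot]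
    exact ((Set.finite_singleton 0).prod (Set.toFinite _)).to_subtype
  have : Finite (AddMonoidHom.toMultiplicativeRight ψ).ker :=
    AddMonoidHom.finite_ker_comp F'.toAddMonoidHom (AddMonoidHom.fst _ _)
  have : Finite (Abelianization.of : G →* _).ker := by
    rw [Abelianization.ker_of]; infer_instance
  exact ⟨n, (AddMonoidHom.toMultiplicativeRight ψ).comp Abelianization.of,
    MonoidHom.finite_ker_comp _ _⟩

theorem card_pi_int_le_of_forall_norm_le {n : ℕ} (T : Finset (Fin n → ℤ)) {r : ℝ} (hr : 0 ≤ r)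
    (hT : ∀ v ∈ T, ‖v‖ ≤ r) : (#T : ℝ) ≤ (2 * r + 1) ^ n := by
  have hm : 0 ≤ ⌊r⌋ := Int.floor_nonneg.mpr hr
  have hsub : T ⊆ Icc (fun _ => -⌊r⌋) fun _ => ⌊r⌋ := by
    intro v hv
    have hvi (i : Fin n) : |v i| ≤ ⌊r⌋ := by
      refine Int.le_floor.mpr ?_
      simpa [Int.norm_eq_abs] using (pi_norm_le_iff_of_nonneg hr).mp (hT v hv) i
    exact mem_Icc.mpr ⟨fun i => neg_le_of_abs_le (hvi i), fun i => le_of_abs_le (hvi i)⟩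
  calc (#T : ℝ) ≤ #(Icc (fun _ : Fin n => -⌊r⌋) fun _ => ⌊r⌋) := by
        exact_mod_cast card_le_card hsub
    _ = (2 * ⌊r⌋ + 1 : ℤ) ^ n := by
        rw [Pi.card_Icc, prod_const, Int.card_Icc, card_univ, Fintype.card_fin,
          show ⌊r⌋ + 1 - -⌊r⌋ = 2 * ⌊r⌋ + 1 by ring]
        rw [← Int.cast_natCast, Nat.cast_pow, Int.toNat_of_nonneg (by omega), Int.cast_pow]
    _ ≤ (2 * r + 1) ^ n := by
        push_cast
        gcongr
        exact Int.floor_le r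

theorem MonoidHom.card_le_of_forall_norm_le {n : ℕ} (φ : G →* Multiplicative (Fin n → ℤ))
    [Finite φ.ker] {r : ℝ} (hr : 0 ≤ r) (S : Finset G) (hS : ∀ g ∈ S, ‖φ g‖ ≤ r) :
    (#S : ℝ) ≤ Nat.card φ.ker * (2 * r + 1) ^ n := by
  classical
  calc (#S : ℝ) ≤ Nat.card φ.ker * #(S.image φ) := by
        exact_mod_cast φ.card_le_card_ker_mul_card_image S
    _ = Nat.card φ.ker * #((S.image φ).image Multiplicative.toAdd) := by
        rw [card_image_of_injective _ Multiplicative.toAdd.injective]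
    _ ≤ Nat.card φ.ker * (2 * r + 1) ^ n := by
        gcongr
        refine card_pi_int_le_of_forall_norm_le _ hr fun v hv => ?_
        obtain ⟨g, hg, rfl⟩ := by simpa using hv
        simpa using hS g hg

end Growth

section L2

variable {G : Type*} [Group G]

theorem sqrt_tsum_sq_eq_norm {α : Type*} (v : lp (fun _ : α => ℝ) 2) : √(∑' a, v a ^ 2) = ‖v‖ := by
  have h := lp.norm_rpow_eq_tsum (p := 2) (by norm_num) v
  simp only [ENNReal.toReal_ofNat, Real.rpow_two, Real.norm_eq_abs, sq_abs] at h
  rw [← h, Real.sqrt_sq (norm_nonneg v)]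

theorem memℓp_two_of_summable_sq {α : Type*} {k : α → ℝ} (hk : Summable fun a => k a ^ 2) :
    Memℓp k 2 :=
  (memℓp_gen_iff (by norm_num)).mpr (by simpa using hk)

theorem tsum_mul_inv_eq_sum {f : G → ℝ} {S : Finset G} (hf : ∀ g ∉ S, f g = 0) (k : G → ℝ)
    (g : G) : ∑' x, f (g * x⁻¹) * k x = ∑ s ∈ S, f s * k (s⁻¹ * g) := by
  rw [← ((Equiv.inv G).trans (Equiv.mulRight g)).tsum_eq]
  simp only [Equiv.trans_apply, Equiv.inv_apply, Equiv.coe_mulRight, mul_inv_rev, inv_inv,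
    mul_inv_cancel_left]
  exact tsum_eq_sum fun s hs => by rw [hf s hs, zero_mul]

theorem sqrt_tsum_sq_sum_mul_le {k : G → ℝ} (hk : Summable fun g => k g ^ 2) (c : G → ℝ)
    (S : Finset G) :
    √(∑' g, (∑ s ∈ S, c s * k (s⁻¹ * g)) ^ 2) ≤ (∑ s ∈ S, |c s|) * √(∑' g, k g ^ 2) := by
  let K (s : G) : lp (fun _ : G => ℝ) 2 :=
    ⟨fun g => k (s⁻¹ * g), memℓp_two_of_summable_sq ((Equiv.mulLeft s⁻¹).summable_iff.mpr hk)⟩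
  have hK (s : G) : ‖K s‖ = √(∑' g, k g ^ 2) := by
    rw [← sqrt_tsum_sq_eq_norm]
    exact congrArg _ ((Equiv.mulLeft s⁻¹).tsum_eq fun g => k g ^ 2)
  calc √(∑' g, (∑ s ∈ S, c s * k (s⁻¹ * g)) ^ 2) = ‖∑ s ∈ S, c s • K s‖ := by
        rw [← sqrt_tsum_sq_eq_norm]
        simp only [K, lp.coeFn_sum, Finset.sum_apply, lp.coeFn_smul, Pi.smul_apply, smul_eq_mul]
    _ ≤ ∑ s ∈ S, ‖c s • K s‖ := norm_sum_le _ _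
    _ = (∑ s ∈ S, |c s|) * √(∑' g, k g ^ 2) := by simp [norm_smul, hK, sum_mul]

theorem sum_abs_le_sqrt_card_mul_sqrt_sum_sq {ι : Type*} (S : Finset ι) (c : ι → ℝ) :
    ∑ i ∈ S, |c i| ≤ √(#S : ℝ) * √(∑ i ∈ S, c i ^ 2) := by
  simpa using Real.sum_mul_le_sqrt_mul_sqrt S (fun _ => 1) fun i => |c i|

theorem sqrt_tsum_conv_sq_le {f k : G → ℝ} {S : Finset G} (hf : ∀ g ∉ S, f g = 0)
    (hk : Summable fun g => k g ^ 2) :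
    √(∑' g, (∑' x, f (g * x⁻¹) * k x) ^ 2) ≤ √(#S : ℝ) * √(∑' g, f g ^ 2) * √(∑' g, k g ^ 2) := by
  simp only [tsum_mul_inv_eq_sum hf]
  rw [tsum_eq_sum (f := fun g => f g ^ 2) (s := S) fun g hg => by simp [hf g hg]]
  exact (sqrt_tsum_sq_sum_mul_le hk f S).trans
    (mul_le_mul_of_nonneg_right (sum_abs_le_sqrt_card_mul_sqrt_sum_sq S f) (Real.sqrt_nonneg _))

end L2

namespace HeckeRDPaper

variable {G : Type*} [Group G]

variable (G) in
def rCosBotEquiv : RCos (⊥ : Subgroup G) ≃ G where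
  toFun := Quotient.out
  invFun := Quotient.mk _
  left_inv := Quotient.out_eq
  right_inv g := by
    have h := QuotientGroup.rightRel_apply.mp (Quotient.mk_out (s := QuotientGroup.rightRel ⊥) g)
    exact (mul_inv_eq_one.mp (Subgroup.mem_bot.mp h)).symm

theorem tsum_rCos_bot (F : G → ℝ) : ∑' x : RCos (⊥ : Subgroup G), F x.out = ∑' g, F g :=
  (rCosBotEquiv G).tsum_eq F

theorem l2_bot (f : G → ℝ) : l2 ⊥ f = √(∑' g, f g ^ 2) := by
  rw [l2, tsum_rCos_bot fun g => f g ^ 2]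

theorem conv_bot (f k : G → ℝ) (g : G) : conv ⊥ f k g = ∑' x, f (g * x⁻¹) * k x :=
  tsum_rCos_bot fun x => f (g * x⁻¹) * k x

theorem FinDosetSupp.finite_support_of_bot {f : G → ℝ} (hf : FinDosetSupp ⊥ f) :
    (Function.support f).Finite := by
  rw [FinDosetSupp] at hf
  refine Set.Finite.of_finite_image ?_ Set.singleton_injective.injOn
  convert hf using 2
  ext s
  simp [eq_comm]

theorem isLengthFunction_norm_comp {E : Type*} [SeminormedGroup E] (φ : G →* E) :
    IsLengthFunction fun g => ‖φ g‖ where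
  nonneg _ := norm_nonneg' _
  map_one := by simp
  map_inv _ := by simp
  subadd g h := by simpa using norm_mul_le' (φ g) (φ h)

theorem IsLengthFunction.isHeckeLength_bot {L : G → ℝ} (hL : IsLengthFunction L) :
    IsHeckeLength ⊥ L :=
  ⟨hL, fun _ h => by rw [Subgroup.mem_bot.mp h, hL.map_one]⟩

theorem groupRDwrt_of_card_le {L : G → ℝ} (P : Polynomial ℝ)
    (hP : ∀ r > 0, ∀ S : Finset G, (∀ g ∈ S, L g ≤ r) → (#S : ℝ) ≤ P.eval r) :
    GroupRDwrt G L := by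
  refine ⟨P, fun r hr f k _ _ hfd hfr _ _ hk => ?_⟩
  set S := hfd.finite_support_of_bot.toFinset
  have hfS (g : G) (hg : g ∉ S) : f g = 0 := by simpa [S] using hg
  have hSr : √(#S : ℝ) ≤ P.eval r :=
    (Real.sqrt_le_self_iff.mpr <|
      (Nat.eq_zero_or_pos #S).imp (by exact_mod_cast ·) (by exact_mod_cast ·)).trans
      (hP r hr S fun g hg => hfr g (by simpa [S] using hg))
  simp only [l2_bot, conv_bot]
  calc _ ≤ √(#S : ℝ) * √(∑' g, f g ^ 2) * √(∑' g, k g ^ 2) :=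
        sqrt_tsum_conv_sq_le hfS ((rCosBotEquiv G).summable_iff.mp hk)
    _ ≤ P.eval r * √(∑' g, f g ^ 2) * √(∑' g, k g ^ 2) := by gcongr

end HeckeRDPaper

open HeckeRDPaper in
/-- Every finitely generated group with finite commutator subgroup
has property (RD). -/
theorem stmt4 {G : Type*} [Group G] (hfg : Group.FG G)
    (hfin : Finite (commutator G)) :
    GroupRD G := by
  obtain ⟨n, φ, hφ⟩ := exists_monoidHom_pi_int_finite_ker (G := G)
  refine ⟨fun g => ‖φ g‖, (isLengthFunction_norm_comp φ).isHeckeLength_bot,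
    groupRDwrt_of_card_le (.C (Nat.card φ.ker : ℝ) * (.C 2 * .X + 1) ^ n) fun r hr S hS => ?_⟩
  simpa using φ.card_le_of_forall_norm_le hr.le S hS
end
end

section
/- Let G be a finitely generated group whose commutator (derived) subgroup is finite, and let H be any subgroup of G. Then H is an almost normal subgroup of G and the Hecke pair (G,H) has property (RD). -/
noncomputable section

/-!
Conjugating `g` by an element of `G` only moves it inside the coset `[G, G] g`, so every
centralizer has finite index; since `H ∩ C(g) ≤ H ∩ gHg⁻¹`, `H` is almost normal.

For (RD), `N = H [G, G]` is normal with finitely generated abelian quotient, a quotient of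
`ℤ^m`. The sup-norm word length of `G ⧸ N`, pulled back to `G`, is a length function vanishing
on `H`, and its ball of radius `r` meets at most `|[G, G]| (2r + 3)^m` right cosets of `H`,
because each coset of `N` is a union of at most `|[G, G]|` right cosets of `H`. The Schur test
bounds the convolution by `f` on `ℓ²(H\G)` by this number times `‖f‖₂`.
-/

namespace HeckeRDPaper

open Finset Polynomial

section Cube

variable {Q ι : Type*} [CommGroup Q] [Fintype ι] [DecidableEq ι] [DecidableEq Q] (s : ι → Q)

def cube (n : ℕ) : Finset Q :=
  (Fintype.piFinset fun _ : ι => Icc (-(n : ℤ)) n).image fun e => ∏ i, s i ^ e i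

variable {s}

lemma mem_cube {n : ℕ} {q : Q} :
    q ∈ cube s n ↔ ∃ e : ι → ℤ, (∀ i, |e i| ≤ n) ∧ ∏ i, s i ^ e i = q := by
  simp [cube, abs_le]

lemma one_mem_cube (n : ℕ) : (1 : Q) ∈ cube s n :=
  mem_cube.2 ⟨0, by simp, by simp⟩

lemma mul_mem_cube {m n : ℕ} {p q : Q} (hp : p ∈ cube s m) (hq : q ∈ cube s n) :
    p * q ∈ cube s (m + n) := by
  obtain ⟨e, he, rfl⟩ := mem_cube.1 hp
  obtain ⟨e', he', rfl⟩ := mem_cube.1 hq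
  refine mem_cube.2 ⟨e + e', fun i => ?_, ?_⟩
  · push_cast
    exact (abs_add_le _ _).trans (add_le_add (he i) (he' i))
  · simp only [Pi.add_apply, zpow_add, prod_mul_distrib]

lemma inv_mem_cube {n : ℕ} {q : Q} (hq : q ∈ cube s n) : q⁻¹ ∈ cube s n := by
  obtain ⟨e, he, rfl⟩ := mem_cube.1 hq
  exact mem_cube.2 ⟨-e, by simpa using he, by simp [prod_inv_distrib]⟩

lemma cube_mono {m n : ℕ} (h : m ≤ n) : cube s m ⊆ cube s n := fun q hq => by
  simpa [Nat.add_sub_cancel' h] using mul_mem_cube hq (one_mem_cube (s := s) (n - m))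

lemma card_cube_le (n : ℕ) : #(cube s n) ≤ (2 * n + 1) ^ Fintype.card ι := by
  refine card_image_le.trans_eq ?_
  simp only [Fintype.card_piFinset, Int.card_Icc, prod_const, card_univ]
  congr 1
  omega

lemma exists_mem_cube (hs : Subgroup.closure (Set.range s) = ⊤) (q : Q) :
    ∃ n, q ∈ cube s n := by
  obtain ⟨e, rfl⟩ := Subgroup.exists_of_mem_closure_range s q (hs ▸ Subgroup.mem_top q)
  refine ⟨univ.sup fun i => (e i).natAbs, mem_cube.2 ⟨e, fun i => ?_, rfl⟩⟩
  rw [Int.abs_eq_natAbs, Nat.cast_le]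
  exact le_sup (f := fun i => (e i).natAbs) (mem_univ i)

variable (s) in
def cubeLength (q : Q) : ℕ := sInf {n | q ∈ cube s n}

lemma cubeLength_le {n : ℕ} {q : Q} (hq : q ∈ cube s n) : cubeLength s q ≤ n :=
  Nat.sInf_le hq

lemma mem_cube_of_cubeLength_le (hs : Subgroup.closure (Set.range s) = ⊤) {n : ℕ} {q : Q}
    (h : cubeLength s q ≤ n) : q ∈ cube s n :=
  cube_mono h (Nat.sInf_mem (exists_mem_cube hs q))

lemma cubeLength_one : cubeLength s 1 = 0 :=
  Nat.le_zero.1 (cubeLength_le (one_mem_cube 0))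

lemma cubeLength_inv (q : Q) : cubeLength s q⁻¹ = cubeLength s q := by
  refine congrArg sInf (Set.ext fun n => ⟨fun h => ?_, inv_mem_cube⟩)
  simpa using inv_mem_cube h

lemma cubeLength_mul_le (hs : Subgroup.closure (Set.range s) = ⊤) (p q : Q) :
    cubeLength s (p * q) ≤ cubeLength s p + cubeLength s q :=
  cubeLength_le (mul_mem_cube (mem_cube_of_cubeLength_le hs le_rfl)
    (mem_cube_of_cubeLength_le hs le_rfl))

lemma isHeckeLength_cubeLength_comp {G : Type*} [Group G] {H : Subgroup G}
    (hs : Subgroup.closure (Set.range s) = ⊤) (π : G →* Q) (hH : H ≤ π.ker) :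
    IsHeckeLength H fun g => (cubeLength s (π g) : ℝ) := by
  refine ⟨⟨fun g => Nat.cast_nonneg _, by simp [cubeLength_one], fun g => by
    simp [cubeLength_inv], fun g h => ?_⟩, fun h hh => by
    simp [MonoidHom.mem_ker.1 (hH hh), cubeLength_one]⟩
  exact_mod_cast (map_mul π g h).symm ▸ cubeLength_mul_le hs (π g) (π h)

end Cube

section RightCosets

variable {G : Type*} [Group G] {H : Subgroup G}

lemma rcos_mk_eq_mk_iff {a b : G} :
    (Quotient.mk'' a : RCos H) = Quotient.mk'' b ↔ b * a⁻¹ ∈ H :=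
  Quotient.eq''.trans QuotientGroup.rightRel_apply

lemma exists_mem_rcos_out_eq_mul (g : G) :
    ∃ h ∈ H, (Quotient.mk'' g : RCos H).out = h * g :=
  ⟨(Quotient.mk'' g : RCos H).out * g⁻¹, rcos_mk_eq_mk_iff.1 (Quotient.out_eq' _).symm, by group⟩

lemma injective_rcos_mk_out_mul (u : G) :
    Function.Injective fun x : RCos H => (Quotient.mk'' (x.out * u) : RCos H) := by
  intro x y hxy
  rw [← Quotient.out_eq' x, ← Quotient.out_eq' y, rcos_mk_eq_mk_iff]
  simpa [mul_assoc] using rcos_mk_eq_mk_iff.1 hxy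

lemma exists_rcos_finset_of_ker_le {Q : Type*} [Group Q] {K : Subgroup G} [K.Normal] [Finite K]
    {π : G →* Q} (hπ : Function.Surjective π) (hker : π.ker ≤ H ⊔ K) (S : Finset Q) :
    ∃ B : Finset (RCos H), (∀ g, π g ∈ S → (Quotient.mk'' g : RCos H) ∈ B) ∧
      #B ≤ #S * Nat.card K := by
  classical
  obtain ⟨σ, hσ⟩ := hπ.hasRightInverse
  have hK := (K : Set G).toFinite
  refine ⟨(S ×ˢ hK.toFinset).image fun p => Quotient.mk'' (p.2 * σ p.1), fun g hg => ?_, ?_⟩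
  · have : g * (σ (π g))⁻¹ ∈ (↑(H ⊔ K) : Set G) := hker (by simp [hσ (π g)])
    obtain ⟨h, hh, c, hc, hhc⟩ := Subgroup.mul_normal H K ▸ this
    refine mem_image.2 ⟨(π g, c), mem_product.2 ⟨hg, hK.mem_toFinset.2 hc⟩, ?_⟩
    generalize σ (π g) = z at hhc ⊢
    rw [rcos_mk_eq_mk_iff, eq_mul_of_mul_inv_eq hhc.symm]
    simpa [mul_assoc] using hh
  · refine card_image_le.trans_eq ?_
    rw [card_product, ← Nat.card_eq_card_finite_toFinset]
    rfl

lemma apply_le_l2 {f : G → ℝ} (hf0 : ∀ g, 0 ≤ f g) (hfH : ∀ g, ∀ h ∈ H, f (h * g) = f g)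
    (hsum : Summable fun x : RCos H => f x.out ^ 2) (g : G) : f g ≤ l2 H f := by
  obtain ⟨h, hh, he⟩ := exists_mem_rcos_out_eq_mul (H := H) g
  calc f g = √(f (Quotient.mk'' g : RCos H).out ^ 2) := by rw [he, hfH g h hh, Real.sqrt_sq (hf0 g)]
    _ ≤ l2 H f := Real.sqrt_le_sqrt (hsum.le_tsum _ fun _ _ => sq_nonneg _)

end RightCosets

section Schur

variable {X : Type*}

lemma sum_le_card_mul_of_injective {Y : Type*} {g : X → ℝ} {c : ℝ} (hc0 : 0 ≤ c)
    (hc : ∀ x, g x ≤ c) {φ : X → Y} (hφ : Function.Injective φ) {B : Finset Y}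
    (hB : ∀ x, g x ≠ 0 → φ x ∈ B) (t : Finset X) : ∑ x ∈ t, g x ≤ #B * c := by
  classical
  calc ∑ x ∈ t, g x = ∑ x ∈ t with g x ≠ 0, g x := (sum_filter_ne_zero t).symm
    _ ≤ #{x ∈ t | g x ≠ 0} * c := by
        simpa using sum_le_card_nsmul _ g c fun x _ => hc x
    _ ≤ #B * c := by
        gcongr
        exact card_le_card_of_injOn φ (fun x hx => hB x (mem_filter.1 hx).2) hφ.injOn

/-- The Schur test. -/
theorem tsum_sq_tsum_mul_le {A : X → X → ℝ} {k : X → ℝ} {C : ℝ} (hA : ∀ y x, 0 ≤ A y x)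
    (hsupp : ∀ y, (Function.support (A y)).Finite)
    (hrow : ∀ y (t : Finset X), ∑ x ∈ t, A y x ≤ C)
    (hcol : ∀ x (t : Finset X), ∑ y ∈ t, A y x ≤ C) (hk : Summable fun x => k x ^ 2) :
    ∑' y, (∑' x, A y x * k x) ^ 2 ≤ C ^ 2 * ∑' x, k x ^ 2 := by
  classical
  rcases isEmpty_or_nonempty X with _ | ⟨⟨y₀⟩⟩
  · simp
  have hC : 0 ≤ C := by simpa using hrow y₀ ∅
  refine tsum_le_of_sum_le' (by positivity) fun s => ?_
  set T := s.biUnion fun y => (hsupp y).toFinset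
  have hT : ∀ y ∈ s, ∀ x ∉ T, A y x = 0 := fun y hy x hx => by
    by_contra h
    exact hx (mem_biUnion.2 ⟨y, hy, (hsupp y).mem_toFinset.2 h⟩)
  calc ∑ y ∈ s, (∑' x, A y x * k x) ^ 2
      = ∑ y ∈ s, (∑ x ∈ T, A y x * k x) ^ 2 := sum_congr rfl fun y hy => by
        rw [tsum_eq_sum fun x hx => by rw [hT y hy x hx, zero_mul]]
    _ ≤ ∑ y ∈ s, C * ∑ x ∈ T, A y x * k x ^ 2 := sum_le_sum fun y _ => by
        refine (sum_sq_le_sum_mul_sum_of_sq_le_mul T (r := fun x => A y x * k x)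
          (fun x _ => hA y x) (fun x _ => mul_nonneg (hA y x) (sq_nonneg (k x)))
          fun x _ => (by ring : (A y x * k x) ^ 2 = A y x * (A y x * k x ^ 2)).le).trans ?_
        exact mul_le_mul_of_nonneg_right (hrow y T)
          (sum_nonneg fun x _ => mul_nonneg (hA y x) (sq_nonneg _))
    _ = C * ∑ x ∈ T, (∑ y ∈ s, A y x) * k x ^ 2 := by
        rw [← mul_sum, sum_comm]
        simp only [sum_mul]
    _ ≤ C * ∑ x ∈ T, C * k x ^ 2 := by
        gcongr with x
        exact hcol x s
    _ ≤ C ^ 2 * ∑' x, k x ^ 2 := by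
        rw [← mul_sum, ← mul_assoc, ← sq]
        exact mul_le_mul_of_nonneg_left (hk.sum_le_tsum T fun x _ => sq_nonneg _) (sq_nonneg C)

end Schur

theorem heckeRDwrt_of_card_ball_le {G : Type*} [Group G] {H : Subgroup G} {L : G → ℝ}
    (hL : IsHeckeLength H L) (P : ℝ[X])
    (hball : ∀ r, 0 < r → ∃ B : Finset (RCos H),
      (∀ g, L g ≤ r → (Quotient.mk'' g : RCos H) ∈ B) ∧ (#B : ℝ) ≤ P.eval r) :
    HeckeRDwrt H L := by
  refine ⟨P, fun r hr f k hf0 hfH _ hfr _ _ hk => ?_⟩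
  obtain ⟨B, hB, hBP⟩ := hball r hr
  have hfB : ∀ g, f g ≠ 0 → (Quotient.mk'' g : RCos H) ∈ B := fun g hg => hB g (hfr g hg)
  have hf_le : ∀ g, f g ≤ l2 H f := by
    refine apply_le_l2 hf0 (fun g h hh => by simpa using hfH g h hh 1 H.one_mem)
      (summable_of_ne_finset_zero (s := B) fun x hx => ?_)
    by_contra h
    exact hx (Quotient.out_eq' x ▸ hfB _ (by simpa using h))
  have hrowB : ∀ y x : RCos H, f (y.out * x.out⁻¹) ≠ 0 →
      (Quotient.mk'' (x.out * y.out⁻¹) : RCos H) ∈ B := fun y x hx =>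
    hB _ (by rw [← hL.1.map_inv, mul_inv_rev, inv_inv]; exact hfr _ hx)
  have hf_l2 : 0 ≤ l2 H f := Real.sqrt_nonneg _
  have hschur := tsum_sq_tsum_mul_le (A := fun y x : RCos H => f (y.out * x.out⁻¹))
    (k := fun x => k x.out) (C := #B * l2 H f) (fun y x => hf0 _)
    (fun y => (B.finite_toSet.preimage (injective_rcos_mk_out_mul y.out⁻¹).injOn).subset
      (hrowB y))
    (fun y => sum_le_card_mul_of_injective hf_l2 (fun x => hf_le _)
      (injective_rcos_mk_out_mul y.out⁻¹) (hrowB y))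
    (fun x => sum_le_card_mul_of_injective hf_l2 (fun y => hf_le _)
      (injective_rcos_mk_out_mul x.out⁻¹) fun y => hfB _) hk
  calc l2 H (conv H f k) ≤ √((#B * l2 H f) ^ 2 * ∑' x : RCos H, k x.out ^ 2) :=
        Real.sqrt_le_sqrt hschur
    _ = #B * l2 H f * l2 H k := by
        rw [Real.sqrt_mul (sq_nonneg _), Real.sqrt_sq (by positivity)]
        rfl
    _ ≤ P.eval r * l2 H f * l2 H k := by
        gcongr
        exact Real.sqrt_nonneg _

section AlmostNormal

open scoped commutatorElement

variable {G : Type*} [Group G]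

lemma index_centralizer_ne_zero [Finite (commutator G)] (g : G) :
    (Subgroup.centralizer {g}).index ≠ 0 := by
  rw [Subgroup.centralizer_eq_comap_stabilizer]
  -- `erw`: the comap is taken along `ConjAct.toConjAct`, with `ConjAct G` unfolded to `G`
  erw [Subgroup.index_comap_of_surjective _ ConjAct.toConjAct.surjective]
  rw [MulAction.index_stabilizer]
  refine Set.ncard_ne_zero_of_mem (MulAction.mem_orbit_self g)
    (((commutator G : Set G).toFinite.image (· * g)).subset ?_)
  rintro _ ⟨c, rfl⟩
  exact ⟨⁅ConjAct.ofConjAct c, g⁆, Subgroup.commutator_mem_commutator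
    (Subgroup.mem_top _) (Subgroup.mem_top _), by simp [ConjAct.smul_def, commutatorElement_def]⟩

lemma almostNormal_of_index_centralizer_ne_zero
    (hG : ∀ g : G, (Subgroup.centralizer {g}).index ≠ 0) (H : Subgroup G) : AlmostNormal H := by
  intro g hg
  refine hG g (Subgroup.index_eq_zero_of_relIndex_eq_zero (K := H) ?_)
  rw [← Subgroup.inf_relIndex_left]
  refine Subgroup.relIndex_eq_zero_of_le_left (fun x hx => Subgroup.mem_map.2 ⟨x, hx.1, ?_⟩) hg
  change g * x * g⁻¹ = x
  rw [mul_inv_eq_iff_eq_mul]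
  exact (Subgroup.mem_centralizer_singleton_iff.1 hx.2).symm

end AlmostNormal

theorem heckeRD_of_ker_le_sup {G Q : Type*} [Group G] [CommGroup Q] [Group.FG Q]
    {H K : Subgroup G} [K.Normal] [Finite K] {π : G →* Q} (hπ : Function.Surjective π)
    (hH : H ≤ π.ker) (hker : π.ker ≤ H ⊔ K) : HeckeRD H := by
  classical
  obtain ⟨S, hS⟩ := Group.FG.out (G := Q)
  have hs : Subgroup.closure (Set.range ((↑) : S → Q)) = ⊤ := by rwa [Subtype.range_coe]
  have hL := isHeckeLength_cubeLength_comp hs π hH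
  refine ⟨_, hL, heckeRDwrt_of_card_ball_le hL (C (Nat.card K : ℝ) * (2 * X + 3) ^ #S)
    fun r hr => ?_⟩
  obtain ⟨B, hB, hcard⟩ := exists_rcos_finset_of_ker_le hπ hker (cube ((↑) : S → Q) ⌈r⌉₊)
  refine ⟨B, fun g hg => hB g (mem_cube_of_cubeLength_le hs
    (Nat.cast_le.1 (hg.trans (Nat.le_ceil r)))), ?_⟩
  have hcube : (#(cube ((↑) : S → Q) ⌈r⌉₊) : ℝ) ≤ (2 * r + 3) ^ #S := by
    calc (#(cube ((↑) : S → Q) ⌈r⌉₊) : ℝ) ≤ ((2 * ⌈r⌉₊ + 1 : ℕ) : ℝ) ^ #S := by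
          exact_mod_cast Fintype.card_coe S ▸ card_cube_le _
      _ ≤ (2 * r + 3) ^ #S := by
          gcongr
          push_cast
          linarith [Nat.ceil_lt_add_one hr.le]
  calc (#B : ℝ) ≤ #(cube ((↑) : S → Q) ⌈r⌉₊) * Nat.card K := by exact_mod_cast hcard
    _ ≤ (2 * r + 3) ^ #S * Nat.card K := by gcongr
    _ = _ := by simp [mul_comm]

end HeckeRDPaper

open HeckeRDPaper in
/-- If `G` is a finitely generated group with finite commutator subgroup,
then every subgroup `H` is almost normal and the Hecke pair `(G,H)` has (RD). -/
theorem stmt5 {G : Type*} [Group G] (hfg : Group.FG G)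
    (hfin : Finite (commutator G)) (H : Subgroup G) :
    AlmostNormal H ∧ HeckeRD H := by
  refine ⟨almostNormal_of_index_centralizer_ne_zero index_centralizer_ne_zero H, ?_⟩
  have hle : commutator G ≤ H ⊔ commutator G := le_sup_right
  have := Subgroup.Normal.of_commutator_le G hle
  have := Subgroup.Normal.quotient_commutative_iff_commutator_le.2 hle
  have hπ := QuotientGroup.mk'_surjective (H ⊔ commutator G)
  have := Group.fg_of_surjective hπ
  open IsMulCommutative in
  exact heckeRD_of_ker_le_sup (K := commutator G) hπ (by simp) (by simp)
end
end

section
/- Let φ : G₁ → G₂ be a group homomorphism whose kernel is finite, and let H₂ be an almost normal subgroup of G₂ contained in the image φ(G₁). Then H₁ := φ⁻¹(H₂) is an almost normal subgroup of G₁, and if the Hecke pair (G₂,H₂) has property (RD) with respect to a length function L₂, then the Hecke pair (G₁,H₁) has property (RD) with respect to the length function L₁ = L₂∘φ. -/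
noncomputable section

/-!
The preimage `H₁ = φ⁻¹(H₂)` contains `ker φ`, and since `H₂ ⊆ φ(G₁)` the map `φ` induces a
bijection from `H₁\G₁` onto the cosets of `H₂` that meet `φ(G₁)`. Extending an `H₁`-invariant
function on `G₁` by zero off `φ(G₁)` therefore gives an `H₂`-invariant function on `G₂` with the
same `ℓ²`-norm, the same double-coset support (pushed forward) and the same lengths, and
convolution commutes with this extension. So the (RD) inequality for `(G₂, H₂)` applied to the
extensions is exactly the (RD) inequality for `(G₁, H₁)`.
-/

namespace HeckeRDPaper

section Comap

variable {G₁ G₂ : Type*} [Group G₁] [Group G₂] (φ : G₁ →* G₂) {H : Subgroup G₂}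

theorem mem_conjS {G : Type*} [Group G] {g x : G} {K : Subgroup G} :
    x ∈ conjS g K ↔ g⁻¹ * x * g ∈ K := by
  rw [conjS, Subgroup.mem_map_equiv, MulAut.conj_symm_apply]

theorem conjS_comap (g : G₁) (H : Subgroup G₂) :
    conjS g (H.comap φ) = (conjS (φ g) H).comap φ := by
  ext x
  simp only [mem_conjS, Subgroup.mem_comap, map_mul, map_inv]

theorem AlmostNormal.comap (hH : AlmostNormal H) (hle : H ≤ φ.range) :
    AlmostNormal (H.comap φ) := fun g => by
  rw [conjS_comap, Subgroup.relIndex_comap, Subgroup.map_comap_eq, inf_eq_right.mpr hle]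
  exact hH (φ g)

theorem IsLengthFunction.comp {L : G₂ → ℝ} (hL : IsLengthFunction L) :
    IsLengthFunction (L ∘ φ) where
  nonneg g := hL.nonneg (φ g)
  map_one := by simpa using hL.map_one
  map_inv g := by simpa using hL.map_inv (φ g)
  subadd g h := by simpa using hL.subadd (φ g) (φ h)

theorem IsHeckeLength.comap {L : G₂ → ℝ} (hL : IsHeckeLength H L) :
    IsHeckeLength (H.comap φ) (L ∘ φ) :=
  ⟨hL.1.comp φ, fun _ hh => hL.2 _ hh⟩

def rcosMap : RCos (H.comap φ) → RCos H :=
  Quotient.map' φ fun a b hab => by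
    rw [QuotientGroup.rightRel_apply] at hab ⊢
    simpa using hab

theorem rcosMap_mk (g : G₁) : rcosMap φ (⟦g⟧ : RCos (H.comap φ)) = ⟦φ g⟧ :=
  rfl

theorem rcosMap_injective : Function.Injective (rcosMap φ (H := H)) := by
  intro a b
  induction a using Quotient.inductionOn with | h a =>
  induction b using Quotient.inductionOn with | h b =>
  rw [rcosMap_mk, rcosMap_mk, Quotient.eq, Quotient.eq, QuotientGroup.rightRel_apply,
    QuotientGroup.rightRel_apply, Subgroup.mem_comap, map_mul, map_inv]
  exact id

theorem exists_out_rcosMap (w : RCos (H.comap φ)) :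
    ∃ h ∈ H, (rcosMap φ w).out = h * φ w.out := by
  have hw : (⟦(rcosMap φ w).out⟧ : RCos H) = ⟦φ w.out⟧ := by
    rw [Quotient.out_eq, ← rcosMap_mk, Quotient.out_eq]
  rw [Quotient.eq, QuotientGroup.rightRel_apply] at hw
  exact ⟨(φ w.out * (rcosMap φ w).out⁻¹)⁻¹, inv_mem hw, by group⟩

theorem mem_range_rcosMap {x : RCos H} (hx : x.out ∈ φ.range) :
    x ∈ Set.range (rcosMap φ) := by
  obtain ⟨g, hg⟩ := hx
  exact ⟨⟦g⟧, by rw [rcosMap_mk, hg, Quotient.out_eq]⟩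

variable {F : G₂ → ℝ}

theorem comp_rcosMap (hF : ∀ h ∈ H, ∀ y, F (h * y) = F y) :
    (fun x : RCos H => F x.out) ∘ rcosMap φ = fun w => F (φ w.out) := by
  funext w
  obtain ⟨h, hh, hw⟩ := exists_out_rcosMap φ w
  rw [Function.comp_apply, hw, hF h hh]

theorem tsum_rcos_comap (hF : ∀ h ∈ H, ∀ y, F (h * y) = F y) (hF₀ : ∀ y ∉ φ.range, F y = 0) :
    ∑' x : RCos H, F x.out = ∑' w : RCos (H.comap φ), F (φ w.out) := by
  rw [← comp_rcosMap φ hF, Function.comp_def,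
    (rcosMap_injective φ).tsum_eq fun x hx => mem_range_rcosMap φ (not_imp_comm.1 (hF₀ _) hx)]

theorem summable_rcos_comap_iff (hF : ∀ h ∈ H, ∀ y, F (h * y) = F y)
    (hF₀ : ∀ y ∉ φ.range, F y = 0) :
    Summable (fun x : RCos H => F x.out) ↔ Summable fun w : RCos (H.comap φ) => F (φ w.out) := by
  rw [← comp_rcosMap φ hF, (rcosMap_injective φ).summable_iff fun x hx =>
    hF₀ _ fun hr => hx (mem_range_rcosMap φ hr)]

theorem l2_comap (hF : ∀ h ∈ H, ∀ y, F (h * y) = F y) (hF₀ : ∀ y ∉ φ.range, F y = 0) :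
    l2 H F = l2 (H.comap φ) (F ∘ φ) := by
  rw [l2, l2, tsum_rcos_comap φ (F := fun y => F y ^ 2) (fun h hh y => by rw [hF h hh])
    (fun y hy => by rw [hF₀ y hy, sq, zero_mul])]
  rfl

theorem conv_comp {K : G₂ → ℝ} (hF : ∀ h ∈ H, ∀ y, F (y * h) = F y)
    (hK : ∀ h ∈ H, ∀ y, K (h * y) = K y) (hK₀ : ∀ y ∉ φ.range, K y = 0) (g : G₁) :
    conv H F K (φ g) = conv (H.comap φ) (F ∘ φ) (K ∘ φ) g := by
  rw [conv, tsum_rcos_comap φ (F := fun y => F (φ g * y⁻¹) * K y)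
    (fun h hh y => by rw [mul_inv_rev, ← mul_assoc, hF _ (inv_mem hh), hK h hh])
    (fun y hy => by rw [hK₀ y hy, mul_zero])]
  simp only [conv, Function.comp_apply, map_mul, map_inv]

end Comap

section Convolution

variable {G : Type*} [Group G] {K : Subgroup G} {f k : G → ℝ}

theorem conv_mul_left (hf : ∀ h ∈ K, ∀ y, f (h * y) = f y) {h : G} (hh : h ∈ K) (y : G) :
    conv K f k (h * y) = conv K f k y :=
  tsum_congr fun x => by rw [mul_assoc, hf h hh]

theorem conv_eq_zero_of_notMem {R : Subgroup G} (hf : ∀ y ∉ R, f y = 0) (hk : ∀ y ∉ R, k y = 0)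
    {y : G} (hy : y ∉ R) : conv K f k y = 0 := by
  refine (tsum_congr fun x => ?_).trans tsum_zero
  by_cases hx : x.out ∈ R
  · rw [hf _ fun h => hy (by simpa using R.mul_mem h hx), zero_mul]
  · rw [hk _ hx, mul_zero]

end Convolution

section Extend

variable {G₁ G₂ : Type*} [Group G₁] [Group G₂] (φ : G₁ →* G₂) {H : Subgroup G₂} {f : G₁ → ℝ}

theorem factorsThrough_of_mul_left (hf : ∀ g, ∀ h ∈ H.comap φ, f (h * g) = f g) :
    f.FactorsThrough φ := by
  intro a b hab
  have hmem : a * b⁻¹ ∈ H.comap φ := by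
    rw [Subgroup.mem_comap, map_mul, map_inv, hab, mul_inv_cancel]
    exact one_mem H
  simpa using hf b _ hmem

theorem extend_eq_zero {y : G₂} (hy : y ∉ φ.range) : Function.extend φ f 0 y = 0 :=
  Function.extend_apply' _ _ _ hy

theorem extend_nonneg (hf : ∀ g, 0 ≤ f g) (y : G₂) : 0 ≤ Function.extend φ f 0 y := by
  classical
  rw [Function.extend_def]
  split_ifs
  exacts [hf _, le_rfl]

theorem exists_of_extend_ne_zero (hfac : f.FactorsThrough φ) {y : G₂}
    (hy : Function.extend φ f 0 y ≠ 0) : ∃ g, φ g = y ∧ f g ≠ 0 := by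
  obtain ⟨g, rfl⟩ : y ∈ φ.range := not_imp_comm.1 (extend_eq_zero φ) hy
  exact ⟨g, rfl, by rwa [hfac.extend_apply] at hy⟩

theorem extend_mul_mul (hfac : f.FactorsThrough φ) {a b : G₁} (hab : ∀ x, f (a * x * b) = f x)
    (y : G₂) : Function.extend φ f 0 (φ a * y * φ b) = Function.extend φ f 0 y := by
  by_cases hy : y ∈ φ.range
  · obtain ⟨x, rfl⟩ := hy
    rw [← map_mul, ← map_mul, hfac.extend_apply, hfac.extend_apply, hab]
  · rw [extend_eq_zero φ hy, extend_eq_zero φ]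
    rintro ⟨x, hx⟩
    exact hy ⟨a⁻¹ * x * b⁻¹, by rw [map_mul, map_mul, map_inv, map_inv, hx]; group⟩

theorem extend_mul_mul_of_mem (hle : H ≤ φ.range)
    (hf : ∀ g, ∀ h₁ ∈ H.comap φ, ∀ h₂ ∈ H.comap φ, f (h₁ * g * h₂) = f g) (y : G₂) :
    ∀ h₁ ∈ H, ∀ h₂ ∈ H, Function.extend φ f 0 (h₁ * y * h₂) = Function.extend φ f 0 y := by
  intro h₁ hh₁ h₂ hh₂
  obtain ⟨m₁, rfl⟩ := hle hh₁
  obtain ⟨m₂, rfl⟩ := hle hh₂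
  exact extend_mul_mul φ (factorsThrough_of_mul_left φ fun g h hh => by
    simpa using hf g h hh 1 (one_mem _)) (fun x => hf x m₁ hh₁ m₂ hh₂) y

theorem extend_mul_left_of_mem (hle : H ≤ φ.range)
    (hf : ∀ g, ∀ h ∈ H.comap φ, f (h * g) = f g) (y : G₂) :
    ∀ h ∈ H, Function.extend φ f 0 (h * y) = Function.extend φ f 0 y := by
  intro h hh
  obtain ⟨m, rfl⟩ := hle hh
  simpa using extend_mul_mul φ (b := 1) (factorsThrough_of_mul_left φ hf)
    (fun x => by simpa using hf x m hh) y

theorem setOf_eq_doubleCoset {G : Type*} [Group G] (K : Subgroup G) (g : G) :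
    {y : G | ∃ h₁ ∈ K, ∃ h₂ ∈ K, y = h₁ * g * h₂} = DoubleCoset.doubleCoset g K K :=
  Set.ext fun _ => DoubleCoset.mem_doubleCoset.symm

theorem image_doubleCoset_comap (hle : H ≤ φ.range) (g : G₁) :
    φ '' DoubleCoset.doubleCoset g (H.comap φ) (H.comap φ) = DoubleCoset.doubleCoset (φ g) H H := by
  ext y
  simp only [Set.mem_image, DoubleCoset.mem_doubleCoset, SetLike.mem_coe]
  constructor
  · rintro ⟨x, ⟨m₁, hm₁, m₂, hm₂, rfl⟩, rfl⟩
    exact ⟨φ m₁, hm₁, φ m₂, hm₂, by rw [map_mul, map_mul]⟩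
  · rintro ⟨h₁, hh₁, h₂, hh₂, rfl⟩
    obtain ⟨m₁, rfl⟩ := hle hh₁
    obtain ⟨m₂, rfl⟩ := hle hh₂
    exact ⟨m₁ * g * m₂, ⟨m₁, hh₁, m₂, hh₂, rfl⟩, by rw [map_mul, map_mul]⟩

theorem FinDosetSupp.extend (hle : H ≤ φ.range) (hfac : f.FactorsThrough φ)
    (hf : FinDosetSupp (H.comap φ) f) : FinDosetSupp H (Function.extend φ f 0) := by
  refine (hf.image (φ '' ·)).subset ?_
  rintro s ⟨y, hy, rfl⟩
  obtain ⟨g, rfl, hg⟩ := exists_of_extend_ne_zero φ hfac hy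
  refine ⟨_, ⟨g, hg, rfl⟩, ?_⟩
  simp only [setOf_eq_doubleCoset]
  exact image_doubleCoset_comap φ hle g

end Extend

theorem HeckeRDwrt.comap {G₁ G₂ : Type*} [Group G₁] [Group G₂] (φ : G₁ →* G₂)
    {H : Subgroup G₂} (hle : H ≤ φ.range) {L : G₂ → ℝ} (hRD : HeckeRDwrt H L) :
    HeckeRDwrt (H.comap φ) (L ∘ φ) := by
  obtain ⟨P, hP⟩ := hRD
  refine ⟨P, fun r hr f k hf₀ hf hfsupp hfL hk₀ hk hks => ?_⟩
  have hff : f.FactorsThrough φ := factorsThrough_of_mul_left φ fun g h hh => by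
    simpa using hf g h hh 1 (one_mem _)
  have hkf : k.FactorsThrough φ := factorsThrough_of_mul_left φ hk
  set F := Function.extend φ f 0
  set K := Function.extend φ k 0
  have hF : ∀ y, ∀ h₁ ∈ H, ∀ h₂ ∈ H, F (h₁ * y * h₂) = F y := extend_mul_mul_of_mem φ hle hf
  have hFl : ∀ h ∈ H, ∀ y, F (h * y) = F y := fun h hh y => by
    simpa using hF y h hh 1 (one_mem _)
  have hFr : ∀ h ∈ H, ∀ y, F (y * h) = F y := fun h hh y => by
    simpa using hF y 1 (one_mem _) h hh
  have hK : ∀ y, ∀ h ∈ H, K (h * y) = K y := extend_mul_left_of_mem φ hle hk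
  have hF₀ : ∀ y ∉ φ.range, F y = 0 := fun _ => extend_eq_zero φ
  have hK₀ : ∀ y ∉ φ.range, K y = 0 := fun _ => extend_eq_zero φ
  have hKs : Summable fun x : RCos H => K x.out ^ 2 := by
    refine (summable_rcos_comap_iff φ (F := fun y => K y ^ 2) (fun h hh y => by rw [hK y h hh])
      (fun y hy => by rw [hK₀ y hy, sq, zero_mul])).2 ?_
    simpa only [K, hkf.extend_apply] using hks
  have hFL : ∀ y, F y ≠ 0 → L y ≤ r := fun y hy => by
    obtain ⟨g, rfl, hg⟩ := exists_of_extend_ne_zero φ hff hy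
    exact hfL g hg
  have hconv : conv H F K ∘ φ = conv (H.comap φ) f k := by
    funext g
    rw [Function.comp_apply, conv_comp φ hFr (fun h hh y => hK y h hh) hK₀, hff.extend_comp,
      hkf.extend_comp]
  have key := hP r hr F K (extend_nonneg φ hf₀) hF (hfsupp.extend φ hle hff) hFL
    (extend_nonneg φ hk₀) hK hKs
  rwa [l2_comap φ hFl hF₀, l2_comap φ (fun h hh y => hK y h hh) hK₀,
    l2_comap φ (fun h hh => conv_mul_left hFl hh) fun _ => conv_eq_zero_of_notMem hF₀ hK₀,
    hconv, hff.extend_comp, hkf.extend_comp] at key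

end HeckeRDPaper

open HeckeRDPaper in
theorem stmt7_general {G₁ G₂ : Type*} [Group G₁] [Group G₂] (φ : G₁ →* G₂)
    (H₂ : Subgroup G₂) (hH₂ : AlmostNormal H₂)
    (hrange : (H₂ : Set G₂) ⊆ Set.range φ)
    (L₂ : G₂ → ℝ) (hL₂ : IsHeckeLength H₂ L₂) :
    AlmostNormal (H₂.comap φ) ∧
      (HeckeRDwrt H₂ L₂ →
        IsHeckeLength (H₂.comap φ) (L₂ ∘ φ) ∧ HeckeRDwrt (H₂.comap φ) (L₂ ∘ φ)) := by
  have hle : H₂ ≤ φ.range := fun _ hx => hrange hx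
  exact ⟨hH₂.comap φ hle, fun hRD => ⟨hL₂.comap φ, hRD.comap φ hle⟩⟩

open HeckeRDPaper in
/-- Pulling back (RD) along a homomorphism with finite kernel. -/
theorem stmt7 {G₁ G₂ : Type*} [Group G₁] [Group G₂] (φ : G₁ →* G₂)
    (hker : Finite φ.ker)
    (H₂ : Subgroup G₂) (hH₂ : AlmostNormal H₂)
    (hrange : (H₂ : Set G₂) ⊆ Set.range φ)
    (L₂ : G₂ → ℝ) (hL₂ : IsHeckeLength H₂ L₂) :
    AlmostNormal (H₂.comap φ) ∧
      (HeckeRDwrt H₂ L₂ →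
        IsHeckeLength (H₂.comap φ) (L₂ ∘ φ) ∧ HeckeRDwrt (H₂.comap φ) (L₂ ∘ φ)) :=
  stmt7_general φ H₂ hH₂ hrange L₂ hL₂
end
end

section
/- Let H and K be two almost normal subgroups of a group G that are conjugate, i.e., K = gHg⁻¹ for some g ∈ G. Then the Hecke pair (G,H) has property (RD) if and only if the Hecke pair (G,K) has property (RD). -/
/-!
A group isomorphism `φ : G ≃* G'` transports every ingredient of property (RD): it maps the
right cosets of `H` bijectively onto those of `φ(H)`, hence preserves the `ℓ²`-norms over
`H\G` and the convolution, and `L ∘ φ⁻¹` is a length function on `(G', φ(H))` whenever `L` is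
one on `(G, H)`. Conjugation by `g` is such an isomorphism, carrying `H` to `K`.
-/

noncomputable section

namespace HeckeRDPaper

def LeftInvariant {G : Type*} [Group G] (K : Subgroup G) (F : G → ℝ) : Prop :=
  ∀ g : G, ∀ h ∈ K, F (h * g) = F g

def RightInvariant {G : Type*} [Group G] (K : Subgroup G) (F : G → ℝ) : Prop :=
  ∀ g : G, ∀ h ∈ K, F (g * h) = F g

section RightCosets

variable {G : Type*} [Group G] {K : Subgroup G} {F : G → ℝ}

/-- `l2` and `conv` are computed on the representatives `Quotient.out`; for left-invariant
functions this choice does not matter. -/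
lemma LeftInvariant.apply_out_mk (hF : LeftInvariant K F) (a : G) :
    F (Quotient.mk (QuotientGroup.rightRel K) a).out = F a := by
  set b := (Quotient.mk (QuotientGroup.rightRel K) a).out
  have hrel : a * b⁻¹ ∈ K := QuotientGroup.rightRel_apply.mp (Quotient.mk_out a)
  simpa using (hF b _ hrel).symm

lemma LeftInvariant.sq (hF : LeftInvariant K F) : LeftInvariant K (fun g => F g ^ 2) :=
  fun g h hh => by simp only [hF g h hh]

lemma LeftInvariant.conv {f : G → ℝ} (hf : LeftInvariant K f) (k : G → ℝ) :
    LeftInvariant K (conv K f k) :=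
  fun g h hh => tsum_congr fun x => by rw [mul_assoc, hf _ h hh]

end RightCosets

section MulEquivTransfer

variable {G G' : Type*} [Group G] [Group G'] (φ : G ≃* G') (H : Subgroup G)

def rcosMapEquiv : RCos H ≃ RCos (H.map φ.toMonoidHom) :=
  Quotient.congr φ.toEquiv fun a b => by
    rw [QuotientGroup.rightRel_apply, QuotientGroup.rightRel_apply, Subgroup.mem_map_equiv]
    simp

variable {φ H}

lemma LeftInvariant.comp_mulEquiv {F : G' → ℝ} (hF : LeftInvariant (H.map φ.toMonoidHom) F) :
    LeftInvariant H (fun g => F (φ g)) :=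
  fun g h hh => by simpa using hF (φ g) (φ h) (Subgroup.mem_map_of_mem _ hh)

lemma LeftInvariant.apply_rcosMapEquiv_out {F : G' → ℝ}
    (hF : LeftInvariant (H.map φ.toMonoidHom) F) (x : RCos H) :
    F (rcosMapEquiv φ H x).out = F (φ x.out) := by
  conv_lhs => rw [← Quotient.out_eq x]
  exact hF.apply_out_mk _

lemma LeftInvariant.tsum_rcos_map {F : G' → ℝ} (hF : LeftInvariant (H.map φ.toMonoidHom) F) :
    ∑' y : RCos (H.map φ.toMonoidHom), F y.out = ∑' x : RCos H, F (φ x.out) := by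
  rw [← (rcosMapEquiv φ H).tsum_eq]
  exact tsum_congr hF.apply_rcosMapEquiv_out

lemma LeftInvariant.summable_rcos_map_iff {F : G' → ℝ}
    (hF : LeftInvariant (H.map φ.toMonoidHom) F) :
    Summable (fun y : RCos (H.map φ.toMonoidHom) => F y.out) ↔
      Summable (fun x : RCos H => F (φ x.out)) := by
  rw [← (rcosMapEquiv φ H).summable_iff]
  exact summable_congr hF.apply_rcosMapEquiv_out

lemma LeftInvariant.l2_map {F : G' → ℝ} (hF : LeftInvariant (H.map φ.toMonoidHom) F) :
    l2 (H.map φ.toMonoidHom) F = l2 H (fun g => F (φ g)) :=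
  congrArg Real.sqrt hF.sq.tsum_rcos_map

lemma conv_comp_mulEquiv {f k : G' → ℝ} (hf : RightInvariant (H.map φ.toMonoidHom) f)
    (hk : LeftInvariant (H.map φ.toMonoidHom) k) (g : G) :
    conv H (fun x => f (φ x)) (fun x => k (φ x)) g = conv (H.map φ.toMonoidHom) f k (φ g) := by
  have hsummand : LeftInvariant (H.map φ.toMonoidHom) (fun z => f (φ g * z⁻¹) * k z) :=
    fun z h hh => by
      simp only [mul_inv_rev, ← mul_assoc, hf _ _ (inv_mem hh), hk z h hh]
  simp only [HeckeRDPaper.conv, hsummand.tsum_rcos_map, map_mul, map_inv]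

lemma image_doset_mulEquiv (g : G) :
    φ '' {y | ∃ h₁ ∈ H, ∃ h₂ ∈ H, y = h₁ * g * h₂} =
      {y | ∃ h₁ ∈ H.map φ.toMonoidHom, ∃ h₂ ∈ H.map φ.toMonoidHom, y = h₁ * φ g * h₂} := by
  ext z
  constructor
  · rintro ⟨y, ⟨h₁, hh₁, h₂, hh₂, rfl⟩, rfl⟩
    exact ⟨φ h₁, Subgroup.mem_map_of_mem _ hh₁, φ h₂, Subgroup.mem_map_of_mem _ hh₂, by simp⟩
  · rintro ⟨_, ⟨h₁, hh₁, rfl⟩, _, ⟨h₂, hh₂, rfl⟩, rfl⟩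
    exact ⟨h₁ * g * h₂, ⟨h₁, hh₁, h₂, hh₂, rfl⟩, by simp⟩

lemma FinDosetSupp.comp_mulEquiv {f : G' → ℝ} (hf : FinDosetSupp (H.map φ.toMonoidHom) f) :
    FinDosetSupp H (fun g => f (φ g)) := by
  refine (hf.preimage (Set.image_injective.mpr φ.injective).injOn).subset ?_
  rintro s ⟨g, hg, rfl⟩
  exact ⟨φ g, hg, image_doset_mulEquiv g⟩

lemma HeckeRDwrt.map {L : G → ℝ} (hL : HeckeRDwrt H L) :
    HeckeRDwrt (H.map φ.toMonoidHom) (fun g => L (φ.symm g)) := by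
  obtain ⟨P, hP⟩ := hL
  refine ⟨P, fun r hr f k hf0 hf hfin hfL hk0 hk hksum => ?_⟩
  have hfl : LeftInvariant (H.map φ.toMonoidHom) f := fun g h hh => by
    simpa using hf g h hh 1 (one_mem _)
  have hfr : RightInvariant (H.map φ.toMonoidHom) f := fun g h hh => by
    simpa using hf g 1 (one_mem _) h hh
  have hk' : LeftInvariant (H.map φ.toMonoidHom) k := hk
  have hf' : ∀ g : G, ∀ h₁ ∈ H, ∀ h₂ ∈ H, f (φ (h₁ * g * h₂)) = f (φ g) :=
    fun g h₁ hh₁ h₂ hh₂ => by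
      simpa using hf (φ g) _ (Subgroup.mem_map_of_mem _ hh₁) _ (Subgroup.mem_map_of_mem _ hh₂)
  have hbound := hP r hr (fun g => f (φ g)) (fun g => k (φ g)) (fun g => hf0 _) hf'
    hfin.comp_mulEquiv (fun g hg => by simpa using hfL (φ g) hg) (fun g => hk0 _)
    hk'.comp_mulEquiv (hk'.sq.summable_rcos_map_iff.mp hksum)
  rwa [funext (conv_comp_mulEquiv hfr hk'), ← (hfl.conv k).l2_map, ← hfl.l2_map,
    ← hk'.l2_map] at hbound

lemma IsHeckeLength.map {L : G → ℝ} (hL : IsHeckeLength H L) :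
    IsHeckeLength (H.map φ.toMonoidHom) (fun g => L (φ.symm g)) := by
  obtain ⟨hlen, hH⟩ := hL
  refine ⟨⟨fun g => hlen.nonneg _, ?_, fun g => ?_, fun g₁ g₂ => ?_⟩, fun h hh => ?_⟩
  · simpa using hlen.map_one
  · simpa using hlen.map_inv _
  · simpa using hlen.subadd _ _
  · exact hH _ (Subgroup.mem_map_equiv.mp hh)

lemma HeckeRD.map (hH : HeckeRD H) : HeckeRD (H.map φ.toMonoidHom) := by
  obtain ⟨L, hL, hrd⟩ := hH
  exact ⟨_, hL.map, hrd.map⟩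

variable (φ H)

lemma heckeRD_map_iff : HeckeRD (H.map φ.toMonoidHom) ↔ HeckeRD H := by
  refine ⟨fun h => ?_, HeckeRD.map⟩
  have hsymm : (H.map φ.toMonoidHom).map φ.symm.toMonoidHom = H :=
    (Subgroup.map_symm_eq_iff_map_eq H).mpr rfl
  simpa only [hsymm] using h.map (φ := φ.symm)

end MulEquivTransfer

end HeckeRDPaper

open HeckeRDPaper in
theorem stmt9_general {G : Type*} [Group G] (H K : Subgroup G)
    (g : G) (hconj : K = conjS g H) :
    HeckeRD H ↔ HeckeRD K := by
  rw [hconj]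
  exact (heckeRD_map_iff (MulAut.conj g) H).symm

open HeckeRDPaper in
/-- Conjugate almost normal subgroups give Hecke pairs which
simultaneously have or fail (RD). -/
theorem stmt9 {G : Type*} [Group G] (H K : Subgroup G)
    (hH : AlmostNormal H) (hK : AlmostNormal K)
    (g : G) (hconj : K = conjS g H) :
    HeckeRD H ↔ HeckeRD K :=
  stmt9_general H K g hconj
end
end
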